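/- Let φ be a binary uniform morphism with matrix ((a,b),(c,d)), a + b = c + d = k, with infinite fixed point w starting in 0, and let g be the graphic with g_u(n) = c·|pref_n(u)|₁ − b·|pref_n(u)|₀. If g_{φ(0)}(k) ≥ −b (equivalently −b(a−c) ≥ −b, i.e., a − c ≤ 1), then w is weakly abelian periodic. In particular, if a = c + 1 then g_{φⁱ(0)}(kⁱ) = −b for all i ≥ 1, so w is WAP along the line y = −b. -/

import Mathlib

open Filter Topology

/-- Number of 1's (`true`) in the length-`n` prefix of the infinite binary word `w`. -/
def ones (w : ℕ → Bool) (n : ℕ) : ℕ :=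
  ((Finset.range n).filter (fun i => w i = true)).card

/-- Number of 0's (`false`) in the length-`n` prefix of `w`. -/
def zeros (w : ℕ → Bool) (n : ℕ) : ℕ := n - ones w n

/-- The graphic of `w`: `g_w(n) = |pref_n(w)|₁ - |pref_n(w)|₀`. -/
def graphic (w : ℕ → Bool) (n : ℕ) : ℤ := (ones w n : ℤ) - (zeros w n : ℤ)

/-- `w` is weakly abelian periodic with frequency `ρ` of the letter 1 in the blocks:
there is a factorization `w = v₀v₁v₂⋯` (cut points `k 0 < k 1 < ⋯`, with `v₀` the
prefix of length `k 0`) such that each block `vᵢ = w[k i, k (i+1))`, `i ≥ 1`,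
has frequency `ρ` of the letter 1. -/
def WAPwith (w : ℕ → Bool) (ρ : ℚ) : Prop :=
  ∃ k : ℕ → ℕ, StrictMono k ∧
    ∀ i : ℕ, ((ones w (k (i+1)) : ℚ) - (ones w (k i) : ℚ))
      = ρ * ((k (i+1) : ℚ) - (k i : ℚ))

/-- `w` is weakly abelian periodic. -/
def WAP (w : ℕ → Bool) : Prop := ∃ ρ : ℚ, WAPwith w ρ

/-- `w` is bounded weakly abelian periodic: WAP with blocks of uniformly bounded length. -/
def BoundedWAP (w : ℕ → Bool) : Prop :=
  ∃ (ρ : ℚ) (k : ℕ → ℕ) (C : ℕ), StrictMono k ∧ (∀ i, k (i+1) - k i ≤ C) ∧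
    ∀ i : ℕ, ((ones w (k (i+1)) : ℚ) - (ones w (k i) : ℚ))
      = ρ * ((k (i+1) : ℚ) - (k i : ℚ))

/-- `w` has bounded width: its graphic lies between two parallel lines with
rational coefficients. -/
def BoundedWidth (w : ℕ → Bool) : Prop :=
  ∃ a b₁ b₂ : ℚ, ∀ n : ℕ,
    a * n + b₁ ≤ (graphic w n : ℚ) ∧ (graphic w n : ℚ) ≤ a * n + b₂

/-- The graphic of the finite word `u` with vectors `v₀ = (1,-b)`, `v₁ = (1,c)`:
`g_u(n) = c·|pref_n(u)|₁ - b·|pref_n(u)|₀`. -/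
def listG (b c : ℕ) (u : List Bool) (n : ℕ) : ℤ :=
  (c : ℤ) * ((u.take n).count true) - (b : ℤ) * ((u.take n).count false)

/-- The graphic of the infinite word `w` with vectors `v₀ = (1,-b)`, `v₁ = (1,c)`:
`g_w(n) = c·|pref_n(w)|₁ - b·|pref_n(w)|₀`. -/
def gW (b c : ℕ) (w : ℕ → Bool) (n : ℕ) : ℤ :=
  (c : ℤ) * (ones w n) - (b : ℤ) * (zeros w n)

/-- `w` is a fixed point of the `k`-uniform binary morphism `0 ↦ φ0`, `1 ↦ φ1`:
the `n`-th letter of `w` is the `(n mod k)`-th letter of the image of the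
`(n div k)`-th letter of `w`. -/
def IsFixedPoint (φ0 φ1 : List Bool) (k : ℕ) (w : ℕ → Bool) : Prop :=
  ∀ n : ℕ, w n = (if w (n / k) = true then φ1 else φ0).getD (n % k) false

/-- A nonnegative square matrix is primitive if some power of it is positive.
A binary morphism is primitive iff its incidence matrix is. -/
def MatPrimitive (M : Matrix (Fin 2) (Fin 2) ℕ) : Prop :=
  ∃ m : ℕ, ∀ i j : Fin 2, 0 < (M ^ m) i j

/-!
On a letter `1` the graphic `gW b c w` rises by `c` and on a `0` it falls by `b`, so
`gW b c w n = (b + c)·|pref_n w|₁ - b·n`: any value taken infinitely often cuts `w` into blocks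
in which the letter `1` has frequency `b / (b + c)`. Since `w` is the fixed point of a
`k`-uniform morphism, `gW b c w (k m) = (a - c) · gW b c w m`, hence `gW b c w (kⁱ) = -b (a - c)ⁱ`.
If `|a - c| ≤ 1` these values lie in `[-b, b]`; if `a < c` they alternate in sign, and a graphic
that falls by at most `b` per step must visit `[0, b)` between a nonnegative and a negative
value. Either way the graphic takes a value infinitely often, by pigeonhole. (When `b = 0`,
the same works with `|pref_n w|₁` itself, which vanishes at every `kⁱ`.)
-/

lemma ones_eq_count (w : ℕ → Bool) (n : ℕ) : ones w n = Nat.count (fun i => w i = true) n :=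
  (Nat.count_eq_card_filter_range _ _).symm

lemma ones_le (w : ℕ → Bool) (n : ℕ) : ones w n ≤ n := by
  rw [ones_eq_count]; exact Nat.count_le _

lemma ones_succ (w : ℕ → Bool) (n : ℕ) :
    ones w (n + 1) = ones w n + if w n = true then 1 else 0 := by
  simp only [ones_eq_count, Nat.count_succ]

lemma gW_eq (b c : ℕ) (w : ℕ → Bool) (n : ℕ) :
    gW b c w n = (b + c : ℤ) * ones w n - b * n := by
  rw [gW, zeros, Nat.cast_sub (ones_le w n)]; ring

lemma gW_sub_le_gW_succ (b c : ℕ) (w : ℕ → Bool) (n : ℕ) :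
    gW b c w n - b ≤ gW b c w (n + 1) := by
  rw [gW_eq, gW_eq, ones_succ]
  split_ifs <;> push_cast <;> linarith [(Nat.cast_nonneg c : (0 : ℤ) ≤ c)]

lemma WAPwith_of_infinite_level {w : ℕ → Bool} {p q v : ℤ} (hp : p ≠ 0)
    (h : {n | p * ones w n - q * n = v}.Infinite) : WAPwith w (q / p) := by
  have hblock : ∀ m n : ℕ, p * ones w m - q * m = v → p * ones w n - q * n = v →
      (ones w n : ℚ) - ones w m = q / p * ((n : ℚ) - m) := by
    intro m n hm hn
    have hq : (p : ℚ) * ((ones w n : ℚ) - ones w m) = q * ((n : ℚ) - m) := by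
      exact_mod_cast (by linear_combination hn - hm :
        p * ((ones w n : ℤ) - ones w m) = q * ((n : ℤ) - m))
    field_simp
    linear_combination hq
  exact ⟨Nat.nth _, Nat.nth_strictMono h, fun i =>
    hblock _ _ (Nat.nth_mem_of_infinite h i) (Nat.nth_mem_of_infinite h (i + 1))⟩

lemma exists_infinite_fiber_of_abs_le {f : ℕ → ℤ} {B : ℤ} (h : {n | |f n| ≤ B}.Infinite) :
    ∃ v, {n | f n = v}.Infinite := by
  by_contra! hfin
  refine h (((Set.finite_Icc (-B) B).biUnion fun v _ => hfin v).subset fun n hn => ?_)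
  exact Set.mem_biUnion (abs_le.mp hn) rfl

lemma exists_nonneg_lt_of_sign_change {f : ℕ → ℤ} {s : ℤ} (hstep : ∀ n, f n - s ≤ f (n + 1))
    {m m' : ℕ} (hmm' : m ≤ m') (hm : 0 ≤ f m) (hm' : f m' < 0) :
    ∃ n, m ≤ n ∧ n < m' ∧ 0 ≤ f n ∧ f n < s := by
  induction m', hmm' using Nat.le_induction with
  | base => omega
  | succ m' hle ih =>
    by_cases hneg : f m' < 0
    · obtain ⟨n, hmn, hnm', hn⟩ := ih hneg
      exact ⟨n, hmn, by omega, hn⟩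
    · exact ⟨m', hle, by omega, by omega, by linarith [hstep m']⟩

lemma infinite_setOf_abs_le_of_apply_pow {f : ℕ → ℤ} {k : ℕ} {s r : ℤ} (hk : 2 ≤ k) (hs : 0 < s)
    (hstep : ∀ n, f n - s ≤ f (n + 1)) (hpow : ∀ i, f (k ^ i) = -s * r ^ i) (hr : r ≤ 1) :
    {n | |f n| ≤ s}.Infinite := by
  rcases lt_or_ge r (-1) with hr' | hr'
  · refine Set.infinite_of_forall_exists_gt fun N => ?_
    have hodd : r ^ (2 * N + 1) < 0 := Odd.pow_neg ⟨N, rfl⟩ (by omega)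
    have heven : 0 < r ^ (2 * N + 2) := Even.pow_pos ⟨N + 1, by ring⟩ (by omega)
    obtain ⟨n, hn, -, hn0, hns⟩ := exists_nonneg_lt_of_sign_change hstep
      (m := k ^ (2 * N + 1)) (m' := k ^ (2 * N + 2)) (Nat.pow_le_pow_right (by omega) (by omega))
      (by rw [hpow]; nlinarith) (by rw [hpow]; nlinarith)
    have hN : 2 * N + 1 < k ^ (2 * N + 1) := Nat.lt_pow_self hk
    exact ⟨n, abs_le.mpr ⟨by linarith, hns.le⟩, by omega⟩
  · refine Set.infinite_of_injective_forall_mem (Nat.pow_right_injective hk) fun i => ?_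
    change |f (k ^ i)| ≤ s
    rw [hpow, abs_mul, abs_neg, abs_of_pos hs, abs_pow]
    exact mul_le_of_le_one_right hs.le (pow_le_one₀ (abs_nonneg r) (abs_le.mpr ⟨hr', hr⟩))

lemma List.count_getD_true (l : List Bool) :
    Nat.count (fun r => l.getD r false = true) l.length = l.count true := by
  induction l with
  | nil => simp
  | cons x t ih =>
    rw [List.length_cons, Nat.count_succ', List.count_cons]
    simp only [List.getD_cons_succ, List.getD_cons_zero, ih]
    cases x <;> simp

lemma ones_one_of_apply_zero {w : ℕ → Bool} (hw0 : w 0 = false) : ones w 1 = 0 := by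
  simp [ones, hw0]

namespace IsFixedPoint

variable {φ0 φ1 : List Bool} {k a b c d : ℕ} {w : ℕ → Bool}

lemma apply_mul_add (hfix : IsFixedPoint φ0 φ1 k w) (m : ℕ) {r : ℕ} (hr : r < k) :
    w (k * m + r) = (if w m = true then φ1 else φ0).getD r false := by
  rw [hfix (k * m + r), Nat.mul_add_div (by omega), Nat.div_eq_of_lt hr, add_zero,
    Nat.mul_add_mod, Nat.mod_eq_of_lt hr]

lemma ones_mul_succ (hfix : IsFixedPoint φ0 φ1 k w) (hlen0 : φ0.length = k)
    (hlen1 : φ1.length = k) (m : ℕ) :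
    ones w (k * (m + 1)) = ones w (k * m) + (if w m = true then φ1 else φ0).count true := by
  have hlen : (if w m = true then φ1 else φ0).length = k := by split_ifs <;> assumption
  rw [ones_eq_count, ones_eq_count, mul_add_one, Nat.count_add, ← List.count_getD_true, hlen]
  congr 1
  rw [Nat.count_eq_card_filter_range, Nat.count_eq_card_filter_range]
  exact congrArg _ <| Finset.filter_congr fun r hr => by
    rw [hfix.apply_mul_add m (Finset.mem_range.mp hr)]

lemma ones_mul (hfix : IsFixedPoint φ0 φ1 k w) (hlen0 : φ0.length = k) (hlen1 : φ1.length = k)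
    (hb : φ0.count true = b) (hd : φ1.count true = d) (m : ℕ) :
    (ones w (k * m) : ℤ) = b * m + (d - b : ℤ) * ones w m := by
  induction m with
  | zero => simp [ones]
  | succ m ih =>
    rw [hfix.ones_mul_succ hlen0 hlen1, ones_succ]
    push_cast
    rw [ih]
    split_ifs <;> simp only [hb, hd] <;> ring

lemma gW_mul (hfix : IsFixedPoint φ0 φ1 k w) (hlen0 : φ0.length = k) (hlen1 : φ1.length = k)
    (ha : φ0.count false = a) (hb : φ0.count true = b)
    (hc : φ1.count false = c) (hd : φ1.count true = d) (m : ℕ) :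
    gW b c w (k * m) = (a - c : ℤ) * gW b c w m := by
  have hab : a + b = k := by rw [← ha, ← hb, List.count_false_add_count_true, hlen0]
  have hcd : c + d = k := by rw [← hc, ← hd, List.count_false_add_count_true, hlen1]
  have hd' : (d : ℤ) = a + b - c := by omega
  rw [gW_eq, gW_eq, hfix.ones_mul hlen0 hlen1 hb hd, hd', ← hab]
  push_cast
  ring

lemma gW_pow (hfix : IsFixedPoint φ0 φ1 k w) (hlen0 : φ0.length = k) (hlen1 : φ1.length = k)
    (ha : φ0.count false = a) (hb : φ0.count true = b)
    (hc : φ1.count false = c) (hd : φ1.count true = d) (hw0 : w 0 = false) (i : ℕ) :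
    gW b c w (k ^ i) = -b * (a - c : ℤ) ^ i := by
  induction i with
  | zero => simp [gW_eq, ones_one_of_apply_zero hw0]
  | succ i ih => rw [pow_succ', hfix.gW_mul hlen0 hlen1 ha hb hc hd, ih]; ring

lemma ones_pow_eq_zero (hfix : IsFixedPoint φ0 φ1 k w) (hlen0 : φ0.length = k)
    (hlen1 : φ1.length = k) (hb : φ0.count true = 0) (hw0 : w 0 = false) (i : ℕ) :
    ones w (k ^ i) = 0 := by
  induction i with
  | zero => exact ones_one_of_apply_zero hw0
  | succ i ih =>
    have h := hfix.ones_mul hlen0 hlen1 hb rfl (k ^ i)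
    rw [ih, ← pow_succ'] at h
    simpa using h

end IsFixedPoint

/-- Theorem 1 (2): Let `φ` be a binary `k`-uniform morphism with matrix
`((a,b),(c,d))` with infinite fixed point `w` starting in `0`, and graphic
`g_u(n) = c·|pref_n(u)|₁ - b·|pref_n(u)|₀`. If `g_{φ(0)}(k) ≥ -b` then `w` is
weakly abelian periodic; in particular, if `a = c + 1` then
`g_{φⁱ(0)}(kⁱ) = g_w(kⁱ) = -b` for all `i ≥ 1` (so `w` is WAP along `y = -b`). -/
theorem morphism_case2_WAP (φ0 φ1 : List Bool) (k a b c d : ℕ) (w : ℕ → Bool)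
    (hk : 2 ≤ k) (hlen0 : φ0.length = k) (hlen1 : φ1.length = k)
    (ha : φ0.count false = a) (hb : φ0.count true = b)
    (hc : φ1.count false = c) (hd : φ1.count true = d)
    (hfix : IsFixedPoint φ0 φ1 k w) (hw0 : w 0 = false) :
    (listG b c φ0 k ≥ -(b : ℤ) → WAP w) ∧
    (a = c + 1 → ∀ i : ℕ, 1 ≤ i → gW b c w (k ^ i) = -(b : ℤ)) := by
  have hpow := hfix.gW_pow hlen0 hlen1 ha hb hc hd hw0
  refine ⟨fun hge => ?_, fun hac i _ => by rw [hpow, hac]; push_cast; ring⟩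
  rcases Nat.eq_zero_or_pos b with rfl | hbpos
  · refine ⟨_, WAPwith_of_infinite_level (p := 1) (q := 0) (v := 0) one_ne_zero ?_⟩
    refine Set.infinite_of_injective_forall_mem (Nat.pow_right_injective hk) fun i => ?_
    simp [hfix.ones_pow_eq_zero hlen0 hlen1 hb hw0 i]
  · have hac : (a - c : ℤ) ≤ 1 := by
      rw [listG, List.take_of_length_le hlen0.le, hb, ha] at hge
      nlinarith
    obtain ⟨v, hv⟩ := exists_infinite_fiber_of_abs_le <| infinite_setOf_abs_le_of_apply_pow hk
      (by positivity) (gW_sub_le_gW_succ b c w) hpow hac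
    exact ⟨_, WAPwith_of_infinite_level (p := b + c) (q := b) (by positivity)
      (by simpa only [gW_eq] using hv)⟩
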